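/- Let a ∈ C be a uniformly asymptotically attractive point of 𝒮, i.e. limsup_{n→∞} sup_{t∈S} ‖a − T_t^n x‖ ≤ ‖a − x‖ for every x ∈ C. Let T_μ^{(n)} : C → E (n ∈ ℕ) be the mappings determined by ⟨T_μ^{(n)}x, x*⟩ = μ_t⟨a − (a − T_t^n x), x*⟩ = μ_t⟨T_t^n x, x*⟩ for all x* ∈ E*. Then limsup_{n→∞} ‖a − T_μ^{(n)}x‖ ≤ ‖a − x‖ for every x ∈ C. -/

import Mathlib

open Filter Topology
open scoped ENNReal

/-!
Testing `a - T_μ^{(n)} x` against a functional `φ` gives `μ_t ⟨a - T_t^n x, φ⟩`, since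
`μ` reproduces constants. A mean has norm one, so this is at most `sup_t ‖a - T_t^n x‖ · ‖φ‖`,
and Hahn–Banach turns the bound into `‖a - T_μ^{(n)} x‖ ≤ sup_t ‖a - T_t^n x‖` for every `n`.
Taking `limsup` and using the attractivity of `a` finishes the proof.
-/

section MeanOnBoundedFunctions

variable {S E : Type*} [NormedAddCommGroup E] [NormedSpace ℝ E]
  {X : Submodule ℝ (lp (fun _ : S => ℝ) ∞)} {μ : X →L[ℝ] ℝ}

theorem norm_apply_le_of_forall_norm_le (hμ : ‖μ‖ ≤ 1) (g : X) {M : ℝ} (hM : 0 ≤ M)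
    (hg : ∀ t, ‖(g : lp (fun _ : S => ℝ) ∞) t‖ ≤ M) : ‖μ g‖ ≤ M :=
  calc ‖μ g‖ ≤ ‖μ‖ * ‖g‖ := μ.le_opNorm g
    _ ≤ 1 * M := mul_le_mul hμ (lp.norm_le_of_forall_le hM hg) (norm_nonneg _) zero_le_one
    _ = M := one_mul M

def HasWeakMean (μ : X →L[ℝ] ℝ) (f : S → E) (z : E) : Prop :=
  ∀ φ : E →L[ℝ] ℝ, ∃ g : X, (∀ t, (g : lp (fun _ : S => ℝ) ∞) t = φ (f t)) ∧ μ g = φ z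

theorem norm_sub_le_of_forall_norm_sub_le (hμ : ‖μ‖ ≤ 1)
    (hone : ∃ e : X, (∀ t, (e : lp (fun _ : S => ℝ) ∞) t = 1) ∧ μ e = 1)
    {f : S → E} {z : E} (havg : HasWeakMean μ f z)
    (y : E) {M : ℝ} (hM : 0 ≤ M) (hf : ∀ t, ‖y - f t‖ ≤ M) : ‖y - z‖ ≤ M := by
  obtain ⟨e, he, hμe⟩ := hone
  refine NormedSpace.norm_le_dual_bound ℝ _ hM fun φ => ?_
  obtain ⟨g, hg, hμg⟩ := havg φ
  have hdiff_apply : ∀ t, ((φ y • e - g : X) : lp (fun _ : S => ℝ) ∞) t = φ (y - f t) := by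
    intro t
    change φ y • (e : lp (fun _ : S => ℝ) ∞) t - (g : lp (fun _ : S => ℝ) ∞) t = _
    rw [he, hg, smul_eq_mul, mul_one, map_sub]
  have hμdiff : μ (φ y • e - g) = φ (y - z) := by
    rw [map_sub, map_smul, hμe, hμg, smul_eq_mul, mul_one, map_sub]
  rw [← hμdiff]
  refine norm_apply_le_of_forall_norm_le hμ _ (mul_nonneg hM (norm_nonneg φ)) fun t => ?_
  rw [hdiff_apply, mul_comm]
  exact φ.le_opNorm_of_le (hf t)

theorem enorm_sub_le_iSup_enorm_sub (hμ : ‖μ‖ ≤ 1)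
    (hone : ∃ e : X, (∀ t, (e : lp (fun _ : S => ℝ) ∞) t = 1) ∧ μ e = 1)
    {f : S → E} {z : E} (havg : HasWeakMean μ f z)
    (y : E) : (‖y - z‖₊ : ℝ≥0∞) ≤ ⨆ t, (‖y - f t‖₊ : ℝ≥0∞) := by
  rcases eq_top_or_lt_top (⨆ t, (‖y - f t‖₊ : ℝ≥0∞)) with htop | hlt
  · exact htop ▸ le_top
  obtain ⟨K, hK⟩ : ∃ K : NNReal, (K : ℝ≥0∞) = ⨆ t, (‖y - f t‖₊ : ℝ≥0∞) :=
    ⟨_, ENNReal.coe_toNNReal hlt.ne⟩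
  have hf : ∀ t, ‖y - f t‖ ≤ K := fun t => by
    have : (‖y - f t‖₊ : ℝ≥0∞) ≤ K := hK ▸ le_iSup (fun t => (‖y - f t‖₊ : ℝ≥0∞)) t
    exact_mod_cast this
  rw [← hK, ENNReal.coe_le_coe, ← NNReal.coe_le_coe, coe_nnnorm]
  exact norm_sub_le_of_forall_norm_sub_le hμ hone havg y K.2 hf

end MeanOnBoundedFunctions

theorem tmu_asymptotically_attractive_point_general
    {S E : Type*}
    [NormedAddCommGroup E] [NormedSpace ℝ E]
    (C : Set E)
    -- the representation
    (T : S → E → E)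
    -- X a subspace of ℓ^∞(S) containing all functions t ↦ ⟨T_t^n x, x*⟩
    (X : Submodule ℝ (lp (fun _ : S => ℝ) ∞))
    (hX : ∀ x ∈ C, ∀ (n : ℕ) (φ : E →L[ℝ] ℝ),
      ∃ g : lp (fun _ : S => ℝ) ∞, g ∈ X ∧ ∀ t : S, g t = φ ((T t)^[n] x))
    -- μ a mean on X : ‖μ‖ = μ(1) = 1 (X contains the constant function 1)
    (μ : X →L[ℝ] ℝ)
    (hμnorm : ‖μ‖ = 1)
    (hμone : ∃ g : lp (fun _ : S => ℝ) ∞, ∃ hg : g ∈ X,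
      (∀ t : S, g t = 1) ∧ μ ⟨g, hg⟩ = 1)
    -- the mappings T_μ^{(n)} determined by ⟨T_μ^{(n)}x, x*⟩ = μ_t⟨T_t^n x, x*⟩
    (Tμ : ℕ → E → E)
    (hTμ : ∀ (n : ℕ), ∀ x ∈ C, ∀ (φ : E →L[ℝ] ℝ)
        (g : lp (fun _ : S => ℝ) ∞) (hg : g ∈ X),
      (∀ t : S, g t = φ ((T t)^[n] x)) → μ ⟨g, hg⟩ = φ (Tμ n x))
    -- a is a uniformly asymptotically attractive point of 𝒮
    (a : E)
    (huaa : ∀ x ∈ C,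
      Filter.limsup (fun n : ℕ => ⨆ t : S, (‖a - (T t)^[n] x‖₊ : ℝ≥0∞)) atTop
        ≤ (‖a - x‖₊ : ℝ≥0∞)) :
    ∀ x ∈ C,
      Filter.limsup (fun n : ℕ => (‖a - Tμ n x‖₊ : ℝ≥0∞)) atTop ≤ (‖a - x‖₊ : ℝ≥0∞) := by
  intro x hx
  obtain ⟨e, heX, he, hμe⟩ := hμone
  have hmean : ∀ n : ℕ, HasWeakMean μ (fun t => (T t)^[n] x) (Tμ n x) := fun n φ => by
    obtain ⟨g, hg, hgt⟩ := hX x hx n φ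
    exact ⟨⟨g, hg⟩, hgt, hTμ n x hx φ g hg hgt⟩
  have hstep : ∀ n : ℕ,
      (‖a - Tμ n x‖₊ : ℝ≥0∞) ≤ ⨆ t : S, (‖a - (T t)^[n] x‖₊ : ℝ≥0∞) := fun n =>
    enorm_sub_le_iSup_enorm_sub hμnorm.le ⟨⟨e, heX⟩, he, hμe⟩ (hmean n) a
  exact (limsup_le_limsup (Eventually.of_forall hstep)).trans (huaa x hx)

/-- If `a ∈ C` is a uniformly asymptotically attractive point of `𝒮`, i.e.
`limsup_n sup_t ‖a − T_t^n x‖ ≤ ‖a − x‖` for every `x ∈ C`, then the mappings `T_μ^{(n)}`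
determined by `⟨T_μ^{(n)}x, x*⟩ = μ_t⟨T_t^n x, x*⟩` satisfy
`limsup_n ‖a − T_μ^{(n)}x‖ ≤ ‖a − x‖` for every `x ∈ C`. -/
theorem tmu_asymptotically_attractive_point
    {S E : Type*} [Semigroup S]
    [NormedAddCommGroup E] [NormedSpace ℝ E] [CompleteSpace E]
    -- E is reflexive
    (hrefl : Function.Surjective (NormedSpace.inclusionInDoubleDual ℝ E))
    -- C nonempty closed convex
    (C : Set E) (hCne : C.Nonempty) (hCcl : IsClosed C) (hCcv : Convex ℝ C)
    -- the representation
    (T : S → E → E)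
    (hTC : ∀ s : S, ∀ x ∈ C, T s x ∈ C)
    (hrep : ∀ s t : S, ∀ x ∈ C, T (s * t) x = T s (T t x))
    -- weak closure of each orbit is weakly compact
    (hwcpt : ∀ x ∈ C, IsCompact (closure (Set.range (fun t => T t x) : Set (WeakSpace ℝ E))))
    -- X a subspace of ℓ^∞(S) containing all functions t ↦ ⟨T_t^n x, x*⟩
    (X : Submodule ℝ (lp (fun _ : S => ℝ) ∞))
    (hX : ∀ x ∈ C, ∀ (n : ℕ) (φ : E →L[ℝ] ℝ),
      ∃ g : lp (fun _ : S => ℝ) ∞, g ∈ X ∧ ∀ t : S, g t = φ ((T t)^[n] x))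
    -- μ a mean on X : ‖μ‖ = μ(1) = 1 (X contains the constant function 1)
    (μ : X →L[ℝ] ℝ)
    (hμnorm : ‖μ‖ = 1)
    (hμone : ∃ g : lp (fun _ : S => ℝ) ∞, ∃ hg : g ∈ X,
      (∀ t : S, g t = 1) ∧ μ ⟨g, hg⟩ = 1)
    -- the mappings T_μ^{(n)} determined by ⟨T_μ^{(n)}x, x*⟩ = μ_t⟨T_t^n x, x*⟩
    (Tμ : ℕ → E → E)
    (hTμ : ∀ (n : ℕ), ∀ x ∈ C, ∀ (φ : E →L[ℝ] ℝ)
        (g : lp (fun _ : S => ℝ) ∞) (hg : g ∈ X),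
      (∀ t : S, g t = φ ((T t)^[n] x)) → μ ⟨g, hg⟩ = φ (Tμ n x))
    -- a is a uniformly asymptotically attractive point of 𝒮
    (a : E) (haC : a ∈ C)
    (huaa : ∀ x ∈ C,
      Filter.limsup (fun n : ℕ => ⨆ t : S, (‖a - (T t)^[n] x‖₊ : ℝ≥0∞)) atTop
        ≤ (‖a - x‖₊ : ℝ≥0∞)) :
    ∀ x ∈ C,
      Filter.limsup (fun n : ℕ => (‖a - Tμ n x‖₊ : ℝ≥0∞)) atTop ≤ (‖a - x‖₊ : ℝ≥0∞) :=
  tmu_asymptotically_attractive_point_general C T X hX μ hμnorm hμone Tμ hTμ a huaa
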